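/- Let C ⊆ ℝⁿ be a polytope and f convex and differentiable on an open set containing C. Suppose (C, f) satisfies the (μ, θ)-error bound relative to the vertex distance v for μ > 0 and θ ∈ [0, 1/2]. Then for all x ∈ C and all S ∈ S(x), max_{a ∈ S, w ∈ C} ⟨∇f(x), a - w⟩ ≥ μ^θ (f(x) - f*)^{1-θ}. -/

import Mathlib

/-- `min {γ ≥ 0 : y - x = γ (w - u) for some w ∈ C and u ∈ T}`. -/
noncomputable def stepDist {E : Type*} [NormedAddCommGroup E] [NormedSpace ℝ E]
    (C T : Set E) (y x : E) : ℝ :=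
  sInf {γ : ℝ | 0 ≤ γ ∧ ∃ w ∈ C, ∃ u ∈ T, y - x = γ • (w - u)}

/-- The collection `S(x)` of supports of convex-combination representations of `x`
by the vertices in `V`. -/
def supports {E : Type*} [NormedAddCommGroup E] [NormedSpace ℝ E]
    (V : Finset E) (x : E) : Set (Set E) :=
  {S | ∃ w : E → ℝ, (∀ v, 0 ≤ w v) ∧ (∑ v ∈ V, w v) = 1 ∧
    (∑ v ∈ V, w v • v) = x ∧ S = {v | v ∈ V ∧ 0 < w v}}

/-- The vertex distance. -/
noncomputable def vertexDist {E : Type*} [NormedAddCommGroup E] [NormedSpace ℝ E]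
    (V : Finset E) (C : Set E) (y x : E) : ℝ :=
  sSup {g : ℝ | ∃ S ∈ supports V x, g = stepDist C (convexHull ℝ S) y x}


/-! For `z ∈ X*` and any decomposition `z - x = γ (w - u)` with `w ∈ C` and `u ∈ conv S`,
the gradient inequality gives `f x - f* ≤ -⟨∇f x, z - x⟩ = γ ⟨∇f x, u - w⟩ ≤ γ M`, where `M` is
the maximum in the claim (a linear functional attains its maximum over `conv S` on `S`).
Taking infima, `f x - f* ≤ M v(z, x)`, hence `f x - f* ≤ M ((f x - f*) / μ) ^ θ` by the error
bound, which rearranges to `μ ^ θ (f x - f*) ^ (1 - θ) ≤ M`. -/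

open Set

theorem Real.le_mul_sInf {s : Set ℝ} {a M : ℝ} (hM : 0 ≤ M) (hs : s.Nonempty)
    (h : ∀ γ ∈ s, a ≤ M * γ) : a ≤ M * sInf s := by
  rw [← smul_eq_mul, ← Real.sInf_smul_of_nonneg hM]
  refine le_csInf hs.smul_set ?_
  rintro _ ⟨γ, hγ, rfl⟩
  exact h γ hγ

theorem Real.rpow_mul_rpow_one_sub_le {a μ θ M : ℝ} (ha : 0 ≤ a) (hμ : 0 < μ) (hθ : θ < 1)
    (hM : 0 ≤ M) (h : a ≤ M * (a / μ) ^ θ) : μ ^ θ * a ^ (1 - θ) ≤ M := by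
  rcases ha.eq_or_lt with rfl | ha
  · rwa [Real.zero_rpow (by linarith), mul_zero]
  have hpow : 0 < (a / μ) ^ θ := by positivity
  have hsplit : μ ^ θ * a ^ (1 - θ) * (a / μ) ^ θ = a := by
    rw [Real.div_rpow ha.le hμ.le, Real.rpow_sub ha, Real.rpow_one]
    field_simp
  rw [← mul_le_mul_iff_of_pos_right hpow, hsplit]
  exact h

section Supports

variable {E : Type*} [NormedAddCommGroup E] [NormedSpace ℝ E] {V : Finset E} {x : E} {S : Set E}

theorem subset_of_mem_supports (hS : S ∈ supports V x) : S ⊆ V := by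
  obtain ⟨w, -, -, -, rfl⟩ := hS
  exact fun v hv => hv.1

theorem supports_finite (V : Finset E) (x : E) : (supports V x).Finite :=
  V.finite_toSet.finite_subsets.subset fun _ hS => subset_of_mem_supports hS

theorem mem_convexHull_of_mem_supports (hS : S ∈ supports V x) : x ∈ convexHull ℝ S := by
  classical
  obtain ⟨w, hw0, hw1, hwx, rfl⟩ := hS
  have hcenter : (V.filter (w · ≠ 0)).centerMass w id = x := by
    rw [Finset.centerMass_filter_ne_zero, Finset.centerMass_eq_of_sum_1 _ _ hw1, ← hwx]
    rfl
  rw [← hcenter]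
  refine Finset.centerMass_mem_convexHull _ (fun v _ => hw0 v)
    (by rw [Finset.sum_filter_ne_zero, hw1]; exact one_pos) fun v hv => ?_
  rw [Finset.mem_filter] at hv
  exact ⟨hv.1, (hw0 v).lt_of_ne' hv.2⟩

theorem stepDist_le_vertexDist (C : Set E) (y : E) (hS : S ∈ supports V x) :
    stepDist C (convexHull ℝ S) y x ≤ vertexDist V C y x := by
  refine le_csSup ?_ ⟨S, hS, rfl⟩
  refine ((supports_finite V x).image fun S => stepDist C (convexHull ℝ S) y x).bddAbove.mono ?_
  rintro _ ⟨S, hS, rfl⟩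
  exact ⟨S, hS, rfl⟩

end Supports

section PairwiseGap

variable {E : Type*} [NormedAddCommGroup E] [NormedSpace ℝ E]

theorem ConvexOn.apply_sub_le_of_hasFDerivAt {C : Set E} {f : E → ℝ} {φ : E →L[ℝ] ℝ} {x z : E}
    (hf : ConvexOn ℝ C f) (hx : x ∈ C) (hz : z ∈ C) (hd : HasFDerivAt f φ x) :
    φ (z - x) ≤ f z - f x := by
  have hline : ConvexOn ℝ (AffineMap.lineMap x z ⁻¹' C) (f ∘ AffineMap.lineMap x z) :=
    hf.comp_affineMap _
  have hderiv : HasDerivAt (f ∘ AffineMap.lineMap x z) (φ (z - x)) (0 : ℝ) := by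
    refine HasFDerivAt.comp_hasDerivAt (0 : ℝ) ?_ AffineMap.hasDerivAt_lineMap
    simpa using hd
  simpa [slope] using
    hline.le_slope_of_hasDerivAt (by simpa using hx) (by simpa using hz) zero_lt_one hderiv

noncomputable def pairwiseGap (φ : E →L[ℝ] ℝ) (S C : Set E) : ℝ :=
  sSup {t : ℝ | ∃ a ∈ S, ∃ w ∈ C, t = φ (a - w)}

variable {φ : E →L[ℝ] ℝ} {S C : Set E}

theorem bddAbove_pairwiseGap (hC : IsCompact C) (hSC : S ⊆ C) :
    BddAbove {t : ℝ | ∃ a ∈ S, ∃ w ∈ C, t = φ (a - w)} := by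
  refine ((hC.prod hC).image (f := fun p : E × E => φ (p.1 - p.2)) (by fun_prop)).bddAbove.mono ?_
  rintro _ ⟨a, ha, w, hw, rfl⟩
  exact ⟨(a, w), ⟨hSC ha, hw⟩, rfl⟩

theorem apply_sub_le_pairwiseGap (hC : IsCompact C) (hSC : S ⊆ C) {u w : E}
    (hu : u ∈ convexHull ℝ S) (hw : w ∈ C) : φ (u - w) ≤ pairwiseGap φ S C := by
  obtain ⟨a, ha, hua⟩ :=
    φ.toLinearMap.convexOn convex_univ |>.exists_ge_of_mem_convexHull (subset_univ S) hu
  calc φ (u - w) ≤ φ (a - w) := by rw [map_sub, map_sub]; exact sub_le_sub_right hua _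
    _ ≤ pairwiseGap φ S C := le_csSup (bddAbove_pairwiseGap hC hSC) ⟨a, ha, w, hw, rfl⟩

theorem pairwiseGap_nonneg (hC : IsCompact C) (hSC : S ⊆ C) (hS : S.Nonempty) :
    0 ≤ pairwiseGap φ S C := by
  obtain ⟨a, ha⟩ := hS
  simpa using apply_sub_le_pairwiseGap (φ := φ) hC hSC (subset_convexHull ℝ S ha) (hSC ha)

theorem ConvexOn.sub_le_pairwiseGap_mul_stepDist {f : E → ℝ} {x z : E} (hf : ConvexOn ℝ C f)
    (hC : IsCompact C) (hSC : S ⊆ C) (hx : x ∈ C) (hxS : x ∈ convexHull ℝ S) (hz : z ∈ C)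
    (hd : HasFDerivAt f φ x) :
    f x - f z ≤ pairwiseGap φ S C * stepDist C (convexHull ℝ S) z x := by
  have hS : S.Nonempty := convexHull_nonempty_iff.1 ⟨x, hxS⟩
  refine Real.le_mul_sInf (pairwiseGap_nonneg hC hSC hS) ⟨1, zero_le_one, z, hz, x, hxS, by simp⟩ ?_
  rintro γ ⟨hγ, w, hw, u, hu, hzx⟩
  have hgrad := hf.apply_sub_le_of_hasFDerivAt hx hz hd
  rw [hzx, map_smul, smul_eq_mul, ← neg_sub u w, map_neg] at hgrad
  linarith [mul_le_mul_of_nonneg_left (apply_sub_le_pairwiseGap (φ := φ) hC hSC hu hw) hγ]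

end PairwiseGap
theorem stmt11_general {E : Type*} [NormedAddCommGroup E] [NormedSpace ℝ E]
    (V : Finset E) (C : Set E) (hC : C = convexHull ℝ (V : Set E))
    (f : E → ℝ) (f' : E → E →L[ℝ] ℝ) (hdiff : ∀ x ∈ C, HasFDerivAt f (f' x) x)
    (hconv : ConvexOn ℝ C f)
    (fstar : ℝ) (hfstar : IsLeast (f '' C) fstar)
    (Xstar : Set E) (hXstar : Xstar = {z ∈ C | f z = fstar})
    (μ θ : ℝ) (hμ : 0 < μ) (hθ : θ ∈ Set.Icc (0 : ℝ) (1 / 2))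
    (heb : ∀ x ∈ C,
      ((f x - fstar) / μ) ^ θ ≥ sInf {d : ℝ | ∃ z ∈ Xstar, d = vertexDist V C z x}) :
    ∀ x ∈ C, ∀ S ∈ supports V x,
      sSup {t : ℝ | ∃ a ∈ S, ∃ w ∈ C, t = f' x (a - w)} ≥
        μ ^ θ * (f x - fstar) ^ (1 - θ) := by
  intro x hx S hS
  subst hXstar
  have hCc : IsCompact C := hC ▸ V.finite_toSet.isCompact_convexHull (𝕜 := ℝ)
  have hSC : S ⊆ C := (subset_of_mem_supports hS).trans (hC ▸ subset_convexHull ℝ _)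
  have hxS := mem_convexHull_of_mem_supports hS
  have hgap := pairwiseGap_nonneg (φ := f' x) hCc hSC (convexHull_nonempty_iff.1 ⟨x, hxS⟩)
  obtain ⟨⟨z₀, hz₀, hfz₀⟩, hmin⟩ := hfstar
  have hdecrease : f x - fstar ≤ pairwiseGap (f' x) S C *
      sInf {d : ℝ | ∃ z ∈ {z ∈ C | f z = fstar}, d = vertexDist V C z x} := by
    refine Real.le_mul_sInf hgap ⟨_, z₀, ⟨hz₀, hfz₀⟩, rfl⟩ ?_
    rintro _ ⟨z, ⟨hz, rfl⟩, rfl⟩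
    exact (hconv.sub_le_pairwiseGap_mul_stepDist hCc hSC hx hxS hz (hdiff x hx)).trans
      (mul_le_mul_of_nonneg_left (stepDist_le_vertexDist C z hS) hgap)
  exact Real.rpow_mul_rpow_one_sub_le (sub_nonneg.2 (hmin ⟨x, hx, rfl⟩)) hμ (by linarith [hθ.2])
    hgap (hdecrease.trans (mul_le_mul_of_nonneg_left (heb x hx) hgap))

/-- If `(C, f)` satisfies the `(μ, θ)`-error bound relative to the vertex distance,
then for all `x ∈ C` and `S ∈ S(x)`,
`max_{a ∈ S, w ∈ C} ⟨∇f(x), a - w⟩ ≥ μ^θ (f(x) - f*)^{1-θ}`. -/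
theorem stmt11 {E : Type*} [NormedAddCommGroup E] [NormedSpace ℝ E]
    (V : Finset E) (C : Set E) (hC : C = convexHull ℝ (V : Set E)) (hCne : C.Nonempty)
    (hV : (V : Set E) = Set.extremePoints ℝ C)
    (f : E → ℝ) (f' : E → E →L[ℝ] ℝ) (hdiff : ∀ x ∈ C, HasFDerivAt f (f' x) x)
    (hconv : ConvexOn ℝ C f)
    (fstar : ℝ) (hfstar : IsLeast (f '' C) fstar)
    (Xstar : Set E) (hXstar : Xstar = {z ∈ C | f z = fstar})
    (μ θ : ℝ) (hμ : 0 < μ) (hθ : θ ∈ Set.Icc (0 : ℝ) (1 / 2))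
    (heb : ∀ x ∈ C,
      ((f x - fstar) / μ) ^ θ ≥ sInf {d : ℝ | ∃ z ∈ Xstar, d = vertexDist V C z x}) :
    ∀ x ∈ C, ∀ S ∈ supports V x,
      sSup {t : ℝ | ∃ a ∈ S, ∃ w ∈ C, t = f' x (a - w)} ≥
        μ ^ θ * (f x - fstar) ^ (1 - θ) :=
  stmt11_general V C hC f f' hdiff hconv fstar hfstar Xstar hXstar μ θ hμ hθ heb
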